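/- In a graph product Γ of groups, two words on the alphabet ⊔_{i∈I}(G_i \ {1}) represent the same element of Γ if and only if one can be transformed into the other by a finite sequence of the following moves and their inverses: (M1') insert a subword g g⁻¹ with g ∈ G_i \ {1}; (M2') replace a letter g ∈ G_i \ {1} by a two-letter subword g₁ g₂ with g₁, g₂ ∈ G_i \ {1} and g = g₁g₂; (M3') swap two consecutive letters g ∈ G_i \ {1}, h ∈ G_j \ {1} whenever i and j are adjacent in 𝒢. -/

import Mathlib

/-- The commutation relators of a graph product along the graph with adjacency `adj`. -/
def graphProdRels {I : Type*} (adj : I → I → Prop) (G : I → Type*) [∀ i, Group (G i)] :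
    Set (Monoid.CoprodI G) :=
  { x | ∃ (i j : I), adj i j ∧ ∃ (gi : G i) (gj : G j),
      x = Monoid.CoprodI.of gi * Monoid.CoprodI.of gj *
        (Monoid.CoprodI.of gi)⁻¹ * (Monoid.CoprodI.of gj)⁻¹ }

/-- The graph product of the groups `G i` along the graph with adjacency relation `adj`:
the quotient of the free product by the normal closure of the commutation relators. -/
abbrev GraphProd {I : Type*} (adj : I → I → Prop) (G : I → Type*) [∀ i, Group (G i)] :
    Type _ :=
  Monoid.CoprodI G ⧸ Subgroup.normalClosure (graphProdRels adj G)

/-- The canonical homomorphism from a vertex group into the graph product. -/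
def GraphProd.of {I : Type*} (adj : I → I → Prop) (G : I → Type*) [∀ i, Group (G i)]
    (i : I) : G i →* GraphProd adj G :=
  (QuotientGroup.mk' _).comp Monoid.CoprodI.of

/-- The parabolic subgroup `Γ_J` generated by the images of the `G j`, `j ∈ J`. -/
def GraphProd.parab {I : Type*} (adj : I → I → Prop) (G : I → Type*) [∀ i, Group (G i)]
    (J : Set I) : Subgroup (GraphProd adj G) :=
  ⨆ j ∈ J, (GraphProd.of adj G j).range

/-- One elementary move on words over the alphabet `⊔_i (G i \ {1})`:
(M1') insert a subword `g g⁻¹`; (M2') replace a letter `g = g₁ g₂` by the subword `g₁ g₂`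
(all letters in the same `G i`, nontrivial); (M3') swap consecutive letters from adjacent
vertex groups. -/
def graphProdMoveStep {I : Type*} (adj : I → I → Prop) (G : I → Type*) [∀ i, Group (G i)]
    (w₁ w₂ : List (Σ i, G i)) : Prop :=
  (∃ (u v : List (Σ i, G i)) (i : I) (g : G i), g ≠ 1 ∧
      w₁ = u ++ v ∧ w₂ = u ++ (⟨i, g⟩ : Σ i, G i) :: (⟨i, g⁻¹⟩ : Σ i, G i) :: v) ∨
  (∃ (u v : List (Σ i, G i)) (i : I) (g₁ g₂ : G i), g₁ ≠ 1 ∧ g₂ ≠ 1 ∧ g₁ * g₂ ≠ 1 ∧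
      w₁ = u ++ (⟨i, g₁ * g₂⟩ : Σ i, G i) :: v ∧
      w₂ = u ++ (⟨i, g₁⟩ : Σ i, G i) :: (⟨i, g₂⟩ : Σ i, G i) :: v) ∨
  (∃ (u v : List (Σ i, G i)) (i j : I) (g : G i) (h : G j), adj i j ∧ g ≠ 1 ∧ h ≠ 1 ∧
      w₁ = u ++ (⟨i, g⟩ : Σ i, G i) :: (⟨j, h⟩ : Σ i, G i) :: v ∧
      w₂ = u ++ (⟨j, h⟩ : Σ i, G i) :: (⟨i, g⟩ : Σ i, G i) :: v)

/-- The element of the graph product represented by a word. -/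
def graphProdWordProd {I : Type*} (adj : I → I → Prop) (G : I → Type*) [∀ i, Group (G i)]
    (w : List (Σ i, G i)) : GraphProd adj G :=
  (w.map fun l => GraphProd.of adj G l.1 l.2).prod

/-! Each move preserves the represented element, since the vertex groups of adjacent vertices
commute in the graph product. Conversely, words modulo the moves form a monoid `Q`; sending
`g ≠ 1` to the class of the one-letter word `g` and `1` to the empty word is multiplicative on
each `G i` by (M1') and (M2'), and (M3') makes the images of adjacent vertex groups commute.
So the graph product maps to the units of `Q`, and this map sends the element represented by a
word with nontrivial letters back to the class of that word. -/

namespace GraphProd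

variable {I : Type*} {adj : I → I → Prop} {G : I → Type*} [∀ i, Group (G i)]

theorem commute_of {i j : I} (hij : adj i j) (g : G i) (h : G j) :
    Commute (of adj G i g) (of adj G j h) := by
  rw [Commute, SemiconjBy, ← commutatorElement_eq_one_iff_mul_comm, commutatorElement_def]
  simp only [of, MonoidHom.coe_comp, Function.comp_apply, ← map_inv, ← map_mul]
  exact (QuotientGroup.eq_one_iff _).mpr (Subgroup.subset_normalClosure ⟨i, j, hij, g, h, rfl⟩)

def lift {H : Type*} [Group H] (f : ∀ i, G i →* H)
    (hf : ∀ i j, adj i j → ∀ (g : G i) (h : G j), Commute (f i g) (f j h)) :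
    GraphProd adj G →* H :=
  QuotientGroup.lift _ (Monoid.CoprodI.lift f) <| Subgroup.normalClosure_le_normal <| by
    rintro _ ⟨i, j, hij, g, h, rfl⟩
    simp [MonoidHom.mem_ker, (hf i j hij g h).eq]

@[simp]
theorem lift_of {H : Type*} [Group H] (f : ∀ i, G i →* H)
    (hf : ∀ i j, adj i j → ∀ (g : G i) (h : G j), Commute (f i g) (f j h)) (i : I) (g : G i) :
    lift f hf (of adj G i g) = f i g :=
  Monoid.CoprodI.lift_of f g

end GraphProd

section Words

variable {I : Type*} (adj : I → I → Prop) (G : I → Type*) [∀ i, Group (G i)]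

@[simp]
theorem graphProdWordProd_nil : graphProdWordProd adj G [] = 1 := rfl

@[simp]
theorem graphProdWordProd_cons (l : Σ i, G i) (w : List (Σ i, G i)) :
    graphProdWordProd adj G (l :: w) = GraphProd.of adj G l.1 l.2 * graphProdWordProd adj G w :=
  List.prod_cons

@[simp]
theorem graphProdWordProd_append (u v : List (Σ i, G i)) :
    graphProdWordProd adj G (u ++ v) = graphProdWordProd adj G u * graphProdWordProd adj G v := by
  simp [graphProdWordProd]

variable {adj G}

theorem graphProdMoveStep.wordProd_eq {w₁ w₂ : List (Σ i, G i)}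
    (hw : graphProdMoveStep adj G w₁ w₂) :
    graphProdWordProd adj G w₁ = graphProdWordProd adj G w₂ := by
  rcases hw with ⟨u, v, i, g, -, rfl, rfl⟩ |
      ⟨u, v, i, g₁, g₂, -, -, -, rfl, rfl⟩ |
      ⟨u, v, i, j, g, h, hij, -, -, rfl, rfl⟩
  · simp [← mul_assoc]
  · simp [← mul_assoc, ← map_mul]
  · simp [← mul_assoc, (GraphProd.commute_of hij g h).eq]

theorem graphProdMoveStep.append {w₁ w₂ : List (Σ i, G i)} (a b : List (Σ i, G i))
    (hw : graphProdMoveStep adj G w₁ w₂) :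
    graphProdMoveStep adj G (a ++ w₁ ++ b) (a ++ w₂ ++ b) := by
  rcases hw with ⟨u, v, i, g, hg, rfl, rfl⟩ |
      ⟨u, v, i, g₁, g₂, hg₁, hg₂, hg, rfl, rfl⟩ |
      ⟨u, v, i, j, g, h, hij, hg, hh, rfl, rfl⟩
  · exact Or.inl ⟨a ++ u, v ++ b, i, g, hg, by simp, by simp⟩
  · exact Or.inr <| Or.inl ⟨a ++ u, v ++ b, i, g₁, g₂, hg₁, hg₂, hg, by simp, by simp⟩
  · exact Or.inr <| Or.inr ⟨a ++ u, v ++ b, i, j, g, h, hij, hg, hh, by simp, by simp⟩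

theorem eqvGen_graphProdMoveStep_append {w₁ w₂ : List (Σ i, G i)} (a b : List (Σ i, G i))
    (hw : Relation.EqvGen (graphProdMoveStep adj G) w₁ w₂) :
    Relation.EqvGen (graphProdMoveStep adj G) (a ++ w₁ ++ b) (a ++ w₂ ++ b) := by
  induction hw with
  | rel _ _ h => exact .rel _ _ (h.append a b)
  | refl => exact .refl _
  | symm _ _ _ ih => exact .symm _ _ ih
  | trans _ _ _ _ _ ih₁ ih₂ => exact .trans _ _ _ ih₁ ih₂

end Words

namespace GraphProd

variable {I : Type*} (adj : I → I → Prop) (G : I → Type*) [∀ i, Group (G i)]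

def moveCon : Con (FreeMonoid (Σ i, G i)) where
  r u v := Relation.EqvGen (graphProdMoveStep adj G) u.toList v.toList
  iseqv := (Relation.EqvGen.is_equivalence _).comap _
  mul' {a b c d} hab hcd := by
    rw [FreeMonoid.toList_mul, FreeMonoid.toList_mul]
    refine .trans _ (b.toList ++ c.toList) _ (eqvGen_graphProdMoveStep_append [] _ hab) ?_
    simpa only [List.append_nil] using eqvGen_graphProdMoveStep_append b.toList [] hcd

variable {adj G}

theorem moveCon_mk_eq_mk {w₁ w₂ : List (Σ i, G i)} (hw : graphProdMoveStep adj G w₁ w₂) :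
    (FreeMonoid.ofList w₁ : (moveCon adj G).Quotient) = FreeMonoid.ofList w₂ :=
  (Con.eq _).mpr (.rel _ _ hw)

variable (adj G) in
open Classical in
noncomputable def letterClass (i : I) : G i →* (moveCon adj G).Quotient where
  toFun g := if g = 1 then 1 else
    (FreeMonoid.of (⟨i, g⟩ : Σ i, G i) : (moveCon adj G).Quotient)
  map_one' := if_pos rfl
  map_mul' g h := by
    by_cases hg : g = 1
    · simp [hg]
    by_cases hh : h = 1
    · simp [hh]
    by_cases hgh : g * h = 1
    · obtain rfl : h = g⁻¹ := eq_inv_of_mul_eq_one_right hgh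
      simpa [hg] using moveCon_mk_eq_mk (Or.inl ⟨[], [], i, g, hg, rfl, rfl⟩)
    · simpa [hg, hh, hgh] using
        moveCon_mk_eq_mk (Or.inr (Or.inl ⟨[], [], i, g, h, hg, hh, hgh, rfl, rfl⟩))

theorem letterClass_of_ne_one {i : I} {g : G i} (hg : g ≠ 1) :
    letterClass adj G i g = (FreeMonoid.of (⟨i, g⟩ : Σ i, G i) : (moveCon adj G).Quotient) :=
  if_neg hg

theorem commute_letterClass {i j : I} (hij : adj i j) (g : G i) (h : G j) :
    Commute (letterClass adj G i g) (letterClass adj G j h) := by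
  by_cases hg : g = 1
  · simp [hg]
  by_cases hh : h = 1
  · simp [hh]
  simpa [Commute, SemiconjBy, letterClass_of_ne_one, hg, hh] using
    moveCon_mk_eq_mk (Or.inr (Or.inr ⟨[], [], i, j, g, h, hij, hg, hh, rfl, rfl⟩))

variable (adj G) in
noncomputable def toMoveClassUnits : GraphProd adj G →* (moveCon adj G).Quotientˣ :=
  lift (fun i => (letterClass adj G i).toHomUnits) fun _ _ hij g h =>
    (commute_letterClass hij g h).units_of_val

theorem toMoveClassUnits_wordProd {w : List (Σ i, G i)} (hw : ∀ l ∈ w, l.2 ≠ 1) :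
    (toMoveClassUnits adj G (graphProdWordProd adj G w) : (moveCon adj G).Quotient) =
      FreeMonoid.ofList w := by
  induction w with
  | nil => simp
  | cons l w ih =>
    simp only [List.forall_mem_cons] at hw
    rw [graphProdWordProd_cons, map_mul, Units.val_mul, ih hw.2]
    simp [toMoveClassUnits, letterClass_of_ne_one hw.1]

end GraphProd

theorem graphProd_word_eq_iff_moves_general {I : Type*} (adj : I → I → Prop) (G : I → Type*)
    [∀ i, Group (G i)]
    (w₁ w₂ : List (Σ i, G i)) (h₁ : ∀ l ∈ w₁, l.2 ≠ 1) (h₂ : ∀ l ∈ w₂, l.2 ≠ 1) :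
    graphProdWordProd adj G w₁ = graphProdWordProd adj G w₂ ↔
      Relation.EqvGen (graphProdMoveStep adj G) w₁ w₂ := by
  constructor
  · intro h
    have hclass := congrArg
      (fun x => (GraphProd.toMoveClassUnits adj G x : (GraphProd.moveCon adj G).Quotient)) h
    simp only [GraphProd.toMoveClassUnits_wordProd h₁, GraphProd.toMoveClassUnits_wordProd h₂]
      at hclass
    exact (Con.eq _).mp hclass
  · exact fun h => Setoid.eqvGen_le (s := Setoid.ker (graphProdWordProd adj G))
      (fun _ _ => graphProdMoveStep.wordProd_eq) h

/-- Two words on the alphabet `⊔_i (G i \ {1})` represent the same element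
of the graph product iff one can be transformed into the other by a finite sequence of the
moves (M1')–(M3') and their inverses (i.e. iff they are related by the equivalence relation
generated by the elementary moves). -/
theorem graphProd_word_eq_iff_moves {I : Type*} (adj : I → I → Prop) (G : I → Type*)
    [∀ i, Group (G i)] (hsymm : Symmetric adj) (hirr : ∀ i, ¬ adj i i)
    (w₁ w₂ : List (Σ i, G i)) (h₁ : ∀ l ∈ w₁, l.2 ≠ 1) (h₂ : ∀ l ∈ w₂, l.2 ≠ 1) :
    graphProdWordProd adj G w₁ = graphProdWordProd adj G w₂ ↔
      Relation.EqvGen (graphProdMoveStep adj G) w₁ w₂ :=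
  graphProd_word_eq_iff_moves_general adj G w₁ w₂ h₁ h₂
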